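/- Let 0 < μ < 1 and define F0 : ℝ⁴ → ℝ⁴ (in the variables φ = (ξ, ξ', η, η')) by F0(φ) = (ξ', 2η' + ∂w0/∂ξ(ξ,η), η', ∂w0/∂η(ξ,η) − 2ξ'). Let A0 be the 4×4 Jacobian matrix of F0 at the point φ0 = ((1−2μ)/2, 0, √3/2, 0). Then the characteristic polynomial of A0 equals λ⁴ + λ² − (27/4)(μ−1)μ. -/

import Mathlib

open Polynomial

/-- The effective potential of the circular restricted three body problem. -/
noncomputable def w0 (μ ξ η : ℝ) : ℝ :=
  (ξ ^ 2 + η ^ 2) / 2 + (1 - μ) / Real.sqrt ((ξ + μ) ^ 2 + η ^ 2)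
    + μ / Real.sqrt ((ξ + μ - 1) ^ 2 + η ^ 2)

/-- Partial derivative of `w0` with respect to the first variable `ξ`. -/
noncomputable def w0ξ (μ ξ η : ℝ) : ℝ := deriv (fun s => w0 μ s η) ξ

/-- Partial derivative of `w0` with respect to the second variable `η`. -/
noncomputable def w0η (μ ξ η : ℝ) : ℝ := deriv (fun s => w0 μ ξ s) η

/-- The first-order vector field of the restricted three body problem in the
synodic frame, in the variables `φ = (ξ, ξ', η, η')`. -/
noncomputable def F0 (μ : ℝ) (φ : Fin 4 → ℝ) : Fin 4 → ℝ :=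
  ![φ 1, 2 * φ 3 + w0ξ μ (φ 0) (φ 2), φ 3, w0η μ (φ 0) (φ 2) - 2 * φ 1]

/-- The equilibrium point corresponding to the Lagrangian point `L4`. -/
noncomputable def φ0 (μ : ℝ) : Fin 4 → ℝ := ![(1 - 2 * μ) / 2, 0, Real.sqrt 3 / 2, 0]

/-- The Jacobian matrix of `F0` at `φ0`: entry `(i, j)` is the partial derivative of
the `i`-th component of `F0` with respect to the `j`-th variable, at `φ0`. -/
noncomputable def A0 (μ : ℝ) : Matrix (Fin 4) (Fin 4) ℝ :=
  Matrix.of fun i j => deriv (fun s => F0 μ (Function.update (φ0 μ) j s) i) (φ0 μ j)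

/-!
At `L4` both primaries are at unit distance, so the second derivatives of the Kepler terms
`m / r` reduce to polynomials in the coordinates and the Hessian of `w0` there is
`w0_ξξ = 3/4`, `w0_ξη = 3√3(1 - 2μ)/4`, `w0_ηη = 9/4`. The Jacobian of `F0` at an equilibrium
with Hessian `(a b; b c)` has characteristic polynomial `λ⁴ + (4 - a - c) λ² + (a c - b²)`,
the `4` coming from the Coriolis terms `±2`.
-/

open Filter Topology

lemma HasDerivAt.div_sqrt_pow {p q : ℝ → ℝ} {p' q' x : ℝ} (n : ℕ) (hp : HasDerivAt p p' x)
    (hq : HasDerivAt q q' x) (hpos : 0 < q x) :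
    HasDerivAt (fun s => p s / √(q s) ^ n)
      ((2 * p' * q x - n * p x * q') / (2 * √(q x) ^ (n + 2))) x := by
  have hr : √(q x) ≠ 0 := (Real.sqrt_pos.2 hpos).ne'
  refine (hp.fun_div ((hq.sqrt hpos.ne').fun_pow n) (pow_ne_zero n hr)).congr_deriv ?_
  have hsq : √(q x) ^ 2 = q x := Real.sq_sqrt hpos.le
  set r := √(q x)
  rw [← hsq]
  rcases n with _ | n
  · field_simp; ring
  · simp only [Nat.add_sub_cancel]
    field_simp
    ring

section Potential

variable (μ : ℝ) {ξ η : ℝ}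

lemma hasDerivAt_dist₁_sq_fst : HasDerivAt (fun s => (s + μ) ^ 2 + η ^ 2) (2 * (ξ + μ)) ξ := by
  simpa using (((hasDerivAt_id ξ).add_const μ).pow 2).add_const (η ^ 2)

lemma hasDerivAt_dist₂_sq_fst :
    HasDerivAt (fun s => (s + μ - 1) ^ 2 + η ^ 2) (2 * (ξ + μ - 1)) ξ := by
  simpa using ((((hasDerivAt_id ξ).add_const μ).sub_const 1).pow 2).add_const (η ^ 2)

lemma hasDerivAt_dist_sq_snd (a : ℝ) : HasDerivAt (fun s => a ^ 2 + s ^ 2) (2 * η) η := by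
  simpa using (hasDerivAt_pow 2 η).const_add (a ^ 2)

lemma hasDerivAt_w0_fst (h₁ : 0 < (ξ + μ) ^ 2 + η ^ 2) (h₂ : 0 < (ξ + μ - 1) ^ 2 + η ^ 2) :
    HasDerivAt (fun s => w0 μ s η)
      (ξ - (1 - μ) * (ξ + μ) / √((ξ + μ) ^ 2 + η ^ 2) ^ 3
        - μ * (ξ + μ - 1) / √((ξ + μ - 1) ^ 2 + η ^ 2) ^ 3) ξ := by
  have hc : HasDerivAt (fun s => (s ^ 2 + η ^ 2) / 2) ξ ξ := by
    simpa using ((hasDerivAt_pow 2 ξ).add_const (η ^ 2)).div_const 2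
  have h := (hc.fun_add ((hasDerivAt_const ξ (1 - μ)).div_sqrt_pow 1
    (hasDerivAt_dist₁_sq_fst μ) h₁)).fun_add
    ((hasDerivAt_const ξ μ).div_sqrt_pow 1 (hasDerivAt_dist₂_sq_fst μ) h₂)
  simp only [pow_one] at h
  exact h.congr_deriv (by push_cast; ring)

lemma hasDerivAt_w0_snd (h₁ : 0 < (ξ + μ) ^ 2 + η ^ 2) (h₂ : 0 < (ξ + μ - 1) ^ 2 + η ^ 2) :
    HasDerivAt (fun s => w0 μ ξ s)
      (η - (1 - μ) * η / √((ξ + μ) ^ 2 + η ^ 2) ^ 3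
        - μ * η / √((ξ + μ - 1) ^ 2 + η ^ 2) ^ 3) η := by
  have hc : HasDerivAt (fun s => (ξ ^ 2 + s ^ 2) / 2) η η := by
    simpa using ((hasDerivAt_pow 2 η).const_add (ξ ^ 2)).div_const 2
  have h := (hc.fun_add ((hasDerivAt_const η (1 - μ)).div_sqrt_pow 1
    (hasDerivAt_dist_sq_snd _) h₁)).fun_add
    ((hasDerivAt_const η μ).div_sqrt_pow 1 (hasDerivAt_dist_sq_snd _) h₂)
  simp only [pow_one] at h
  exact h.congr_deriv (by push_cast; ring)

lemma eventually_noncollision (h₁ : 0 < (ξ + μ) ^ 2 + η ^ 2) (h₂ : 0 < (ξ + μ - 1) ^ 2 + η ^ 2) :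
    ∀ᶠ p : ℝ × ℝ in 𝓝 (ξ, η), 0 < (p.1 + μ) ^ 2 + p.2 ^ 2 ∧ 0 < (p.1 + μ - 1) ^ 2 + p.2 ^ 2 := by
  have c₁ : Continuous fun p : ℝ × ℝ => (p.1 + μ) ^ 2 + p.2 ^ 2 := by fun_prop
  have c₂ : Continuous fun p : ℝ × ℝ => (p.1 + μ - 1) ^ 2 + p.2 ^ 2 := by fun_prop
  exact ((c₁.tendsto _).eventually (lt_mem_nhds h₁)).and
    ((c₂.tendsto _).eventually (lt_mem_nhds h₂))

lemma w0ξ_eventuallyEq (h₁ : 0 < (ξ + μ) ^ 2 + η ^ 2) (h₂ : 0 < (ξ + μ - 1) ^ 2 + η ^ 2) :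
    ∀ᶠ p : ℝ × ℝ in 𝓝 (ξ, η), w0ξ μ p.1 p.2 = p.1
      - (1 - μ) * (p.1 + μ) / √((p.1 + μ) ^ 2 + p.2 ^ 2) ^ 3
      - μ * (p.1 + μ - 1) / √((p.1 + μ - 1) ^ 2 + p.2 ^ 2) ^ 3 :=
  (eventually_noncollision μ h₁ h₂).mono fun _ hp => (hasDerivAt_w0_fst μ hp.1 hp.2).deriv

lemma w0η_eventuallyEq (h₁ : 0 < (ξ + μ) ^ 2 + η ^ 2) (h₂ : 0 < (ξ + μ - 1) ^ 2 + η ^ 2) :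
    ∀ᶠ p : ℝ × ℝ in 𝓝 (ξ, η), w0η μ p.1 p.2 = p.2
      - (1 - μ) * p.2 / √((p.1 + μ) ^ 2 + p.2 ^ 2) ^ 3
      - μ * p.2 / √((p.1 + μ - 1) ^ 2 + p.2 ^ 2) ^ 3 :=
  (eventually_noncollision μ h₁ h₂).mono fun _ hp => (hasDerivAt_w0_snd μ hp.1 hp.2).deriv

lemma hasDerivAt_w0ξ_fst (h₁ : 0 < (ξ + μ) ^ 2 + η ^ 2) (h₂ : 0 < (ξ + μ - 1) ^ 2 + η ^ 2) :
    HasDerivAt (fun s => w0ξ μ s η)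
      (1 - (1 - μ) * (η ^ 2 - 2 * (ξ + μ) ^ 2) / √((ξ + μ) ^ 2 + η ^ 2) ^ 5
        - μ * (η ^ 2 - 2 * (ξ + μ - 1) ^ 2) / √((ξ + μ - 1) ^ 2 + η ^ 2) ^ 5) ξ := by
  have hp₁ := ((hasDerivAt_id' ξ).add_const μ).const_mul (1 - μ)
  have hp₂ := (((hasDerivAt_id' ξ).add_const μ).sub_const 1).const_mul μ
  have hev : (fun s => w0ξ μ s η) =ᶠ[𝓝 ξ] _ :=
    ((by fun_prop : Continuous fun s : ℝ => (s, η)).tendsto ξ).eventually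
      (w0ξ_eventuallyEq μ h₁ h₂)
  have h := ((hasDerivAt_id' ξ).fun_sub
    (hp₁.div_sqrt_pow 3 (hasDerivAt_dist₁_sq_fst μ) h₁)).fun_sub
    (hp₂.div_sqrt_pow 3 (hasDerivAt_dist₂_sq_fst μ) h₂)
  exact (h.congr_of_eventuallyEq hev).congr_deriv (by push_cast; ring)

lemma hasDerivAt_w0ξ_snd (h₁ : 0 < (ξ + μ) ^ 2 + η ^ 2) (h₂ : 0 < (ξ + μ - 1) ^ 2 + η ^ 2) :
    HasDerivAt (fun s => w0ξ μ ξ s)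
      (3 * (1 - μ) * (ξ + μ) * η / √((ξ + μ) ^ 2 + η ^ 2) ^ 5
        + 3 * μ * (ξ + μ - 1) * η / √((ξ + μ - 1) ^ 2 + η ^ 2) ^ 5) η := by
  have hev : (fun s => w0ξ μ ξ s) =ᶠ[𝓝 η] _ :=
    ((by fun_prop : Continuous fun s : ℝ => (ξ, s)).tendsto η).eventually
      (w0ξ_eventuallyEq μ h₁ h₂)
  have h := ((hasDerivAt_const η ξ).fun_sub ((hasDerivAt_const η ((1 - μ) * (ξ + μ))).div_sqrt_pow
    3 (hasDerivAt_dist_sq_snd _) h₁)).fun_sub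
    ((hasDerivAt_const η (μ * (ξ + μ - 1))).div_sqrt_pow 3 (hasDerivAt_dist_sq_snd _) h₂)
  exact (h.congr_of_eventuallyEq hev).congr_deriv (by push_cast; ring)

lemma hasDerivAt_w0η_fst (h₁ : 0 < (ξ + μ) ^ 2 + η ^ 2) (h₂ : 0 < (ξ + μ - 1) ^ 2 + η ^ 2) :
    HasDerivAt (fun s => w0η μ s η)
      (3 * (1 - μ) * (ξ + μ) * η / √((ξ + μ) ^ 2 + η ^ 2) ^ 5
        + 3 * μ * (ξ + μ - 1) * η / √((ξ + μ - 1) ^ 2 + η ^ 2) ^ 5) ξ := by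
  have hev : (fun s => w0η μ s η) =ᶠ[𝓝 ξ] _ :=
    ((by fun_prop : Continuous fun s : ℝ => (s, η)).tendsto ξ).eventually
      (w0η_eventuallyEq μ h₁ h₂)
  have h := ((hasDerivAt_const ξ η).fun_sub ((hasDerivAt_const ξ ((1 - μ) * η)).div_sqrt_pow
    3 (hasDerivAt_dist₁_sq_fst μ) h₁)).fun_sub
    ((hasDerivAt_const ξ (μ * η)).div_sqrt_pow 3 (hasDerivAt_dist₂_sq_fst μ) h₂)
  exact (h.congr_of_eventuallyEq hev).congr_deriv (by push_cast; ring)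

lemma hasDerivAt_w0η_snd (h₁ : 0 < (ξ + μ) ^ 2 + η ^ 2) (h₂ : 0 < (ξ + μ - 1) ^ 2 + η ^ 2) :
    HasDerivAt (fun s => w0η μ ξ s)
      (1 - (1 - μ) * ((ξ + μ) ^ 2 - 2 * η ^ 2) / √((ξ + μ) ^ 2 + η ^ 2) ^ 5
        - μ * ((ξ + μ - 1) ^ 2 - 2 * η ^ 2) / √((ξ + μ - 1) ^ 2 + η ^ 2) ^ 5) η := by
  have hev : (fun s => w0η μ ξ s) =ᶠ[𝓝 η] _ :=
    ((by fun_prop : Continuous fun s : ℝ => (ξ, s)).tendsto η).eventually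
      (w0η_eventuallyEq μ h₁ h₂)
  have h := ((hasDerivAt_id' η).fun_sub (((hasDerivAt_id' η).const_mul (1 - μ)).div_sqrt_pow
    3 (hasDerivAt_dist_sq_snd _) h₁)).fun_sub
    (((hasDerivAt_id' η).const_mul μ).div_sqrt_pow 3 (hasDerivAt_dist_sq_snd _) h₂)
  exact (h.congr_of_eventuallyEq hev).congr_deriv (by push_cast; ring)

end Potential

def rotatingFrameMatrix {R : Type*} [CommRing R] (a b c : R) : Matrix (Fin 4) (Fin 4) R :=
  !![0, 1, 0, 0; a, 0, b, 2; 0, 0, 0, 1; b, -2, c, 0]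

theorem charpoly_rotatingFrameMatrix {R : Type*} [CommRing R] (a b c : R) :
    (rotatingFrameMatrix a b c).charpoly = X ^ 4 + C (4 - a - c) * X ^ 2 + C (a * c - b ^ 2) := by
  simp [rotatingFrameMatrix, Matrix.charpoly, Matrix.det_succ_row_zero, Fin.sum_univ_succ,
    Fin.succAbove, map_ofNat]
  ring

section L4

variable (μ : ℝ)

lemma L4_dist₁_sq : ((1 - 2 * μ) / 2 + μ) ^ 2 + (√3 / 2) ^ 2 = 1 := by
  rw [div_pow, Real.sq_sqrt zero_le_three]; ring

lemma L4_dist₂_sq : ((1 - 2 * μ) / 2 + μ - 1) ^ 2 + (√3 / 2) ^ 2 = 1 := by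
  rw [div_pow, Real.sq_sqrt zero_le_three]; ring

lemma A0_eq_rotatingFrameMatrix :
    A0 μ = rotatingFrameMatrix (3 / 4) (3 * √3 / 4 * (1 - 2 * μ)) (9 / 4) := by
  have h₁ := (L4_dist₁_sq μ).symm ▸ one_pos
  have h₂ := (L4_dist₂_sq μ).symm ▸ one_pos
  ext i j
  fin_cases i <;> fin_cases j <;> simp [A0, F0, φ0, rotatingFrameMatrix, Function.update_apply,
    (hasDerivAt_w0ξ_fst μ h₁ h₂).deriv, (hasDerivAt_w0ξ_snd μ h₁ h₂).deriv,
    (hasDerivAt_w0η_fst μ h₁ h₂).deriv, (hasDerivAt_w0η_snd μ h₁ h₂).deriv]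
  all_goals
    rw [L4_dist₁_sq, L4_dist₂_sq, Real.sqrt_one]
    norm_num [div_pow]
    ring

end L4

theorem charpoly_at_L4 (μ : ℝ) :
    (A0 μ).charpoly = X ^ 4 + X ^ 2 - C ((27 / 4) * (μ - 1) * μ) := by
  have h_trace : (4 - 3 / 4 - 9 / 4 : ℝ) = 1 := by norm_num
  have h_det : 3 / 4 * (9 / 4) - (3 * √3 / 4 * (1 - 2 * μ)) ^ 2 = -(27 / 4 * (μ - 1) * μ) := by
    rw [mul_pow, div_pow, mul_pow, Real.sq_sqrt zero_le_three]
    ring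
  rw [A0_eq_rotatingFrameMatrix, charpoly_rotatingFrameMatrix, h_trace, h_det, map_one,
    one_mul, map_neg, ← sub_eq_add_neg]
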